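/- arXiv:1702.05127 — 3 statements merged into one kernel-verified Lean document; each statement's English description precedes it below -/
import Mathlib

section
/- Let n ≥ 3, let u ∈ U_n be an ultrametric, and let i, j, k be three distinct elements of {1,…,n} with u_ij < u_ik = u_jk. Let ε be a real number with 0 < ε < u_ik − u_ij, and define the dissimilarity map δ by δ_ik = u_ik + ε, δ_jk = u_jk − ε, and δ_pq = u_pq for all other pairs. Then d(δ, U_n) = ε and u ∈ C(δ, U_n), i.e., u is an l∞-closest ultrametric to δ. -/
/-!
In `δ` the triangle `i, j, k` violates the ultrametric inequality by `2ε`: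
`δ_ik = u_ik + ε` while `max δ_ij δ_jk = u_ik - ε`. An ultrametric `v` at distance `t` from `δ`
satisfies `v_ik ≤ max v_ij v_jk`, and moving the three coordinates by at most `t` can close a gap
of `2ε` only if `t ≥ ε`. On the other hand `u` is at distance exactly `ε` from `δ`.
-/

/-- Index set for unordered pairs of distinct elements of `{1,…,n}`: ordered pairs
`(i, j)` with `i < j`. -/
abbrev PairIdx (n : ℕ) := {p : Fin n × Fin n // p.1 < p.2}

/-- A dissimilarity map on `n` elements: a point of `ℝ^(n choose 2)`, viewed as a
real-valued function on unordered pairs of distinct elements.  The product metric on this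
type is exactly the `l∞`-metric. -/
abbrev DissimMap (n : ℕ) := PairIdx n → ℝ

/-- The value of a dissimilarity map on the unordered pair `{i, j}` (zero if `i = j`). -/
def dm {n : ℕ} (u : DissimMap n) (i j : Fin n) : ℝ :=
  if h : i < j then u ⟨(i, j), h⟩ else if h' : j < i then u ⟨(j, i), h'⟩ else 0

/-- The set of ultrametrics on `n` elements. -/
def Ultrametrics (n : ℕ) : Set (DissimMap n) :=
  {u | ∀ i j k : Fin n, i ≠ j → i ≠ k → j ≠ k → dm u i j ≤ max (dm u i k) (dm u j k)}

/-- The set of points of `S` that are `l∞`-closest to `x`. -/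
noncomputable def closestPts {n : ℕ} (x : DissimMap n) (S : Set (DissimMap n)) :
    Set (DissimMap n) :=
  {y ∈ S | dist x y = Metric.infDist x S}

/-- Build a dissimilarity map from a matrix of values. -/
def ofMat {n : ℕ} (A : Matrix (Fin n) (Fin n) ℝ) : DissimMap n := fun p => A p.1.1 p.1.2

theorem Finset.pair_eq_pair_iff {α : Type*} [DecidableEq α] {a b c d : α} :
    ({a, b} : Finset α) = {c, d} ↔ a = c ∧ b = d ∨ a = d ∧ b = c := by
  rw [← Finset.coe_inj]
  push_cast
  exact Set.pair_eq_pair_iff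

theorem Metric.infDist_eq_dist_of_forall_dist_le {α : Type*} [PseudoMetricSpace α]
    {x y : α} {s : Set α} (hy : y ∈ s) (h : ∀ v ∈ s, dist x y ≤ dist x v) :
    Metric.infDist x s = dist x y :=
  le_antisymm (Metric.infDist_le_dist_of_mem hy) ((Metric.le_infDist ⟨y, hy⟩).mpr h)

section DissimMap

variable {n : ℕ}

theorem dm_comm (u : DissimMap n) (a b : Fin n) : dm u a b = dm u b a := by
  unfold dm
  rcases lt_trichotomy a b with h | rfl | h
  · simp [h, lt_asymm h]
  · rfl
  · simp [h, lt_asymm h]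

theorem dm_eq_of_pair_eq (u : DissimMap n) {a b c d : Fin n}
    (h : ({a, b} : Finset (Fin n)) = {c, d}) : dm u a b = dm u c d := by
  rcases Finset.pair_eq_pair_iff.mp h with ⟨rfl, rfl⟩ | ⟨rfl, rfl⟩
  · rfl
  · exact dm_comm u a b

theorem abs_dm_sub_le_dist (x y : DissimMap n) {a b : Fin n} (h : a ≠ b) :
    |dm x a b - dm y a b| ≤ dist x y := by
  rcases h.lt_or_gt with h | h
  · simpa [dm, h, Real.dist_eq] using dist_le_pi_dist x y ⟨(a, b), h⟩
  · simpa [dm, h, lt_asymm h, Real.dist_eq] using dist_le_pi_dist x y ⟨(b, a), h⟩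

theorem dist_le_of_forall_abs_dm_sub_le (x y : DissimMap n) {r : ℝ} (hr : 0 ≤ r)
    (h : ∀ a b : Fin n, a < b → |dm x a b - dm y a b| ≤ r) : dist x y ≤ r := by
  refine (dist_pi_le_iff hr).mpr fun ⟨⟨a, b⟩, hab⟩ => ?_
  simpa [dm, hab, Real.dist_eq] using h a b hab

theorem dist_le_of_dm_eq_off_two_pairs (x y : DissimMap n) {i j k : Fin n} {r : ℝ}
    (hik : |dm x i k - dm y i k| ≤ r) (hjk : |dm x j k - dm y j k| ≤ r)
    (hrest : ∀ p q : Fin n, p ≠ q → ({p, q} : Finset (Fin n)) ≠ {i, k} →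
      ({p, q} : Finset (Fin n)) ≠ {j, k} → dm x p q = dm y p q) :
    dist x y ≤ r := by
  have hr : 0 ≤ r := (abs_nonneg _).trans hik
  refine dist_le_of_forall_abs_dm_sub_le x y hr fun a b hab => ?_
  by_cases hpik : ({a, b} : Finset (Fin n)) = {i, k}
  · rwa [dm_eq_of_pair_eq x hpik, dm_eq_of_pair_eq y hpik]
  by_cases hpjk : ({a, b} : Finset (Fin n)) = {j, k}
  · rwa [dm_eq_of_pair_eq x hpjk, dm_eq_of_pair_eq y hpjk]
  rwa [hrest a b hab.ne hpik hpjk, sub_self, abs_zero]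

theorem dm_sub_max_le_two_mul_dist (x : DissimMap n) {v : DissimMap n}
    (hv : v ∈ Ultrametrics n) {i j k : Fin n} (hij : i ≠ j) (hik : i ≠ k) (hjk : j ≠ k) :
    dm x i k - max (dm x i j) (dm x j k) ≤ 2 * dist x v := by
  have hultra : dm v i k ≤ max (dm v i j) (dm v j k) := by
    simpa only [dm_comm v k j] using hv i k j hik hij hjk.symm
  have hik' := abs_le.mp (abs_dm_sub_le_dist x v hik)
  have hij' := abs_le.mp (abs_dm_sub_le_dist x v hij)
  have hjk' := abs_le.mp (abs_dm_sub_le_dist x v hjk)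
  rcases le_max_iff.mp hultra with h | h
  · linarith [le_max_left (dm x i j) (dm x j k)]
  · linarith [le_max_right (dm x i j) (dm x j k)]

end DissimMap

theorem perturbed_ultrametric_closest_general (n : ℕ)
    (u : DissimMap n) (hu : u ∈ Ultrametrics n)
    (i j k : Fin n) (hij : i ≠ j) (hik : i ≠ k) (hjk : j ≠ k)
    (h2 : dm u i k = dm u j k)
    (ε : ℝ) (hε0 : 0 < ε) (hε1 : ε < dm u i k - dm u i j)
    (δ : DissimMap n)
    (hδik : dm δ i k = dm u i k + ε)
    (hδjk : dm δ j k = dm u j k - ε)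
    (hδ : ∀ p q : Fin n, p ≠ q → ({p, q} : Finset (Fin n)) ≠ {i, k} →
      ({p, q} : Finset (Fin n)) ≠ {j, k} → dm δ p q = dm u p q) :
    Metric.infDist δ (Ultrametrics n) = ε ∧ u ∈ closestPts δ (Ultrametrics n) := by
  have hδij : dm δ i j = dm u i j := by
    refine hδ i j hij (fun h => ?_) (fun h => ?_) <;>
      rcases Finset.pair_eq_pair_iff.mp h with ⟨h, h'⟩ | ⟨h, h'⟩ <;> contradiction
  have hlower : ∀ v ∈ Ultrametrics n, ε ≤ dist δ v := fun v hv => by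
    have := dm_sub_max_le_two_mul_dist δ hv hij hik hjk
    rw [hδik, hδij, hδjk, ← h2, max_eq_right (by linarith)] at this
    linarith
  have hupper : dist δ u ≤ ε := by
    refine dist_le_of_dm_eq_off_two_pairs δ u (i := i) (j := j) (k := k) ?_ ?_ hδ
    · rw [hδik, add_sub_cancel_left, abs_of_pos hε0]
    · rw [hδjk, sub_sub_cancel_left, abs_neg, abs_of_pos hε0]
  have hdist : dist δ u = ε := le_antisymm hupper (hlower u hu)
  have hinf : Metric.infDist δ (Ultrametrics n) = dist δ u :=
    Metric.infDist_eq_dist_of_forall_dist_le hu fun v hv => hdist ▸ hlower v hv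
  exact ⟨hinf.trans hdist, hu, hinf.symm⟩

/-- perturbing an ultrametric `u` with `u_ij < u_ik = u_jk` by adding `ε` to
the `{i,k}` coordinate and subtracting `ε` from the `{j,k}` coordinate (for
`0 < ε < u_ik - u_ij`) yields a dissimilarity map `δ` with `d(δ, U_n) = ε` for which `u`
is an `l∞`-closest ultrametric. -/
theorem perturbed_ultrametric_closest (n : ℕ) (hn : 3 ≤ n)
    (u : DissimMap n) (hu : u ∈ Ultrametrics n)
    (i j k : Fin n) (hij : i ≠ j) (hik : i ≠ k) (hjk : j ≠ k)
    (h1 : dm u i j < dm u i k) (h2 : dm u i k = dm u j k)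
    (ε : ℝ) (hε0 : 0 < ε) (hε1 : ε < dm u i k - dm u i j)
    (δ : DissimMap n)
    (hδik : dm δ i k = dm u i k + ε)
    (hδjk : dm δ j k = dm u j k - ε)
    (hδ : ∀ p q : Fin n, p ≠ q → ({p, q} : Finset (Fin n)) ≠ {i, k} →
      ({p, q} : Finset (Fin n)) ≠ {j, k} → dm δ p q = dm u p q) :
    Metric.infDist δ (Ultrametrics n) = ε ∧ u ∈ closestPts δ (Ultrametrics n) :=
  perturbed_ultrametric_closest_general n u hu i j k hij hik hjk h2 ε hε0 hε1 δ hδik hδjk hδ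
end

section
/- Let δ = (5,5,10,5,9,11) ∈ ℝ^6 in coordinates (x_12, x_13, x_14, x_23, x_24, x_34). Then d(δ, U_4) = 1, and the four ultrametrics (6,6,10,6,10,10), (4,6,10,6,10,10), (6,4,10,6,10,10), and (6,6,10,4,10,10) all belong to C(δ, U_4); in particular, the set of l∞-closest ultrametrics to δ contains ultrametrics realizing the unresolved topology and all three binary resolutions of the tritomy. -/
/-! If `u` is an ultrametric with `d(δ, u) = ε`, then `u₃₄ ≤ max (u₂₃, u₂₄)` forces
`δ₃₄ - max (δ₂₃, δ₂₄) ≤ 2ε`; here this gap is `11 - 9 = 2`, so `ε ≥ 1`. Conversely, putting leaf 4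
at distance `10` from the others and giving `{1, 2, 3}` any ultrametric with all three sides in
`[4, 6]` stays within `1` of `δ` in every coordinate, and the four points of the theorem are of
this form. -/

lemma abs_dm_sub_dm_le_dist {n : ℕ} (x u : DissimMap n) (i j : Fin n) :
    |dm x i j - dm u i j| ≤ dist x u := by
  unfold dm
  split_ifs
  · exact dist_le_pi_dist x u _
  · exact dist_le_pi_dist x u _
  · simp

lemma zero_mem_ultrametrics (n : ℕ) : (0 : DissimMap n) ∈ Ultrametrics n := by
  intro i j k _ _ _
  simp [dm]

lemma sub_max_le_two_mul_dist_of_mem_ultrametrics {n : ℕ} (x : DissimMap n) {u : DissimMap n}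
    (hu : u ∈ Ultrametrics n) {i j k : Fin n} (hij : i ≠ j) (hik : i ≠ k) (hjk : j ≠ k) :
    dm x i j - max (dm x i k) (dm x j k) ≤ 2 * dist x u := by
  have hu_ijk := hu i j k hij hik hjk
  have h_ij := abs_le.mp (abs_dm_sub_dm_le_dist x u i j)
  have h_ik := abs_le.mp (abs_dm_sub_dm_le_dist x u i k)
  have h_jk := abs_le.mp (abs_dm_sub_dm_le_dist x u j k)
  have : max (dm u i k) (dm u j k) ≤ max (dm x i k) (dm x j k) + dist x u :=
    max_le (by linarith [le_max_left (dm x i k) (dm x j k)])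
      (by linarith [le_max_right (dm x i k) (dm x j k)])
  linarith

lemma sub_max_le_two_mul_infDist_ultrametrics {n : ℕ} (x : DissimMap n) {i j k : Fin n}
    (hij : i ≠ j) (hik : i ≠ k) (hjk : j ≠ k) :
    dm x i j - max (dm x i k) (dm x j k) ≤ 2 * Metric.infDist x (Ultrametrics n) := by
  rw [← div_le_iff₀' two_pos, Metric.le_infDist ⟨0, zero_mem_ultrametrics n⟩]
  intro u hu
  rw [div_le_iff₀' two_pos]
  exact sub_max_le_two_mul_dist_of_mem_ultrametrics x hu hij hik hjk

lemma mem_closestPts_of_dist_le {n : ℕ} {x y : DissimMap n} {S : Set (DissimMap n)}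
    (hy : y ∈ S) (h : dist x y ≤ Metric.infDist x S) : y ∈ closestPts x S :=
  ⟨hy, le_antisymm h (Metric.infDist_le_dist_of_mem hy)⟩

def withOutgroup (a b c D : ℝ) : DissimMap 4 :=
  ofMat !![0, a, b, D; a, 0, c, D; b, c, 0, D; D, D, D, 0]

lemma withOutgroup_mem_ultrametrics {a b c D : ℝ} (hab : a ≤ max b c) (hbc : b ≤ max a c)
    (hca : c ≤ max a b) (hD : max a (max b c) ≤ D) : withOutgroup a b c D ∈ Ultrametrics 4 := by
  simp only [max_le_iff] at hD
  intro i j k _ _ _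
  fin_cases i <;> fin_cases j <;> fin_cases k <;> simp_all [dm, withOutgroup, ofMat, or_comm]

lemma dist_withOutgroup_le_one {a b c : ℝ} (ha : |a - 5| ≤ 1) (hb : |b - 5| ≤ 1)
    (hc : |c - 5| ≤ 1) :
    dist (ofMat !![0,5,5,10; 5,0,5,9; 5,5,0,11; 10,9,11,0]) (withOutgroup a b c 10) ≤ 1 := by
  rw [dist_pi_le_iff zero_le_one]
  rintro ⟨⟨i, j⟩, hij⟩
  fin_cases i <;> fin_cases j <;> simp_all [withOutgroup, ofMat, Real.dist_eq, abs_sub_comm] <;>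
    norm_num

/-- for `δ = (5,5,10,5,9,11)` (coordinates `(x₁₂,x₁₃,x₁₄,x₂₃,x₂₄,x₃₄)`),
`d(δ, U₄) = 1` and the four ultrametrics `(6,6,10,6,10,10)`, `(4,6,10,6,10,10)`,
`(6,4,10,6,10,10)`, `(6,6,10,4,10,10)` — realizing the unresolved tritomy and its three
binary resolutions — are all `l∞`-closest ultrametrics to `δ`. -/
theorem closest_ultrametrics_all_resolutions :
    Metric.infDist (ofMat !![0,5,5,10; 5,0,5,9; 5,5,0,11; 10,9,11,0])
      (Ultrametrics 4) = 1 ∧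
    ofMat !![0,6,6,10; 6,0,6,10; 6,6,0,10; 10,10,10,0] ∈
      closestPts (ofMat !![0,5,5,10; 5,0,5,9; 5,5,0,11; 10,9,11,0]) (Ultrametrics 4) ∧
    ofMat !![0,4,6,10; 4,0,6,10; 6,6,0,10; 10,10,10,0] ∈
      closestPts (ofMat !![0,5,5,10; 5,0,5,9; 5,5,0,11; 10,9,11,0]) (Ultrametrics 4) ∧
    ofMat !![0,6,4,10; 6,0,6,10; 4,6,0,10; 10,10,10,0] ∈
      closestPts (ofMat !![0,5,5,10; 5,0,5,9; 5,5,0,11; 10,9,11,0]) (Ultrametrics 4) ∧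
    ofMat !![0,6,6,10; 6,0,4,10; 6,4,0,10; 10,10,10,0] ∈
      closestPts (ofMat !![0,5,5,10; 5,0,5,9; 5,5,0,11; 10,9,11,0]) (Ultrametrics 4) := by
  have lower : 1 ≤ Metric.infDist (ofMat !![0,5,5,10; 5,0,5,9; 5,5,0,11; 10,9,11,0])
      (Ultrametrics 4) := by
    -- the triple of leaves 3, 4, 2 (`Fin 4` counts from 0)
    have h := sub_max_le_two_mul_infDist_ultrametrics
      (ofMat !![0,5,5,10; 5,0,5,9; 5,5,0,11; 10,9,11,0]) (i := 2) (j := 3) (k := 1)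
      (by decide) (by decide) (by decide)
    simp +decide [dm, ofMat] at h
    norm_num at h
    linarith
  have upper := (Metric.infDist_le_dist_of_mem
    (withOutgroup_mem_ultrametrics (a := 6) (b := 6) (c := 6) (D := 10)
      (by norm_num) (by norm_num) (by norm_num) (by norm_num))).trans
    (dist_withOutgroup_le_one (by norm_num) (by norm_num) (by norm_num))
  have infDist_eq : _ = (1 : ℝ) := le_antisymm upper lower
  refine ⟨infDist_eq, ?_, ?_, ?_, ?_⟩ <;>
    refine mem_closestPts_of_dist_le (withOutgroup_mem_ultrametrics ?_ ?_ ?_ ?_)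
      (infDist_eq ▸ dist_withOutgroup_le_one ?_ ?_ ?_) <;> norm_num
end

section
/- Let δ ∈ ℝ^(n choose 2) be a dissimilarity map and suppose δ_U is a subdominant ultrametric for δ, i.e., δ_U ∈ U_n, δ_U ≤ δ coordinatewise, and every ultrametric v with v ≤ δ coordinatewise satisfies v ≤ δ_U coordinatewise. Then every l∞-closest ultrametric u ∈ C(δ, U_n) satisfies u_p ≤ (δ_U)_p + d(δ, U_n) for every pair p; in particular every element of C(δ, U_n) is coordinatewise bounded above by the canonical closest ultrametric δ_U + d(δ, U_n)·𝟙. -/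
/-! Subtracting `r = d(δ, U_n)` from every coordinate of a closest ultrametric `u` keeps it an
ultrametric, and since `‖δ - u‖∞ = r` the shifted map lies below `δ`; subdominance of `δ_U`
then gives `u - r ≤ δ_U`. -/

theorem Pi.sub_le_of_dist_le {ι : Type*} [Fintype ι] {x y : ι → ℝ} {r : ℝ}
    (hxy : dist x y ≤ r) (i : ι) : y i - r ≤ x i := by
  have hi : |x i - y i| ≤ r := by
    rw [← Real.dist_eq]
    exact (dist_le_pi_dist x y i).trans hxy
  linarith [(abs_sub_le_iff.mp hi).2]

theorem dm_sub_const {n : ℕ} (u : DissimMap n) (c : ℝ) {i j : Fin n} (hij : i ≠ j) :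
    dm (fun q => u q - c) i j = dm u i j - c := by
  unfold dm
  rcases hij.lt_or_gt with h | h
  · simp [h]
  · simp [h, not_lt.mpr h.le]

theorem sub_const_mem_ultrametrics {n : ℕ} {u : DissimMap n} (hu : u ∈ Ultrametrics n)
    (c : ℝ) : (fun q => u q - c) ∈ Ultrametrics n := by
  intro i j k hij hik hjk
  rw [dm_sub_const u c hij, dm_sub_const u c hik, dm_sub_const u c hjk, max_sub_sub_right]
  exact sub_le_sub_right (hu i j k hij hik hjk) c

theorem closest_le_canonical_general (n : ℕ) (δ δU : DissimMap n)
    (h3 : ∀ v ∈ Ultrametrics n, (∀ p, v p ≤ δ p) → ∀ p, v p ≤ δU p) :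
    ∀ u ∈ closestPts δ (Ultrametrics n), ∀ p,
      u p ≤ δU p + Metric.infDist δ (Ultrametrics n) := by
  rintro u ⟨hu, hdist⟩ p
  have hshift := h3 _ (sub_const_mem_ultrametrics hu (Metric.infDist δ (Ultrametrics n)))
    (Pi.sub_le_of_dist_le hdist.le) p
  linarith

/-- if `δ_U` is a subdominant ultrametric for `δ` (the coordinatewise
maximum ultrametric coordinatewise below `δ`), then every `l∞`-closest ultrametric to `δ`
is coordinatewise bounded above by the canonical closest ultrametric
`δ_U + d(δ, U_n)·𝟙`. -/
theorem closest_le_canonical (n : ℕ) (δ δU : DissimMap n)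
    (h1 : δU ∈ Ultrametrics n) (h2 : ∀ p, δU p ≤ δ p)
    (h3 : ∀ v ∈ Ultrametrics n, (∀ p, v p ≤ δ p) → ∀ p, v p ≤ δU p) :
    ∀ u ∈ closestPts δ (Ultrametrics n), ∀ p,
      u p ≤ δU p + Metric.infDist δ (Ultrametrics n) :=
  closest_le_canonical_general n δ δU h3
end
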